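/- arXiv:1909.06988 — 3 statements merged into one kernel-verified Lean document; each statement's English description precedes it below -/
import Mathlib

section
/- Let G be a graph that is bicycle-free at radius r, let w : E → {±1} be an edge-signing of G, and let G₂ be the associated 2-lift of G. Then G₂ is bicycle-free at radius r. -/
open scoped Classical

namespace NearRamanujan

variable {V : Type*} [Fintype V] [DecidableEq V]

/-- The set of vertices within distance `r` of `v` in `G`. -/
noncomputable def ball (G : SimpleGraph V) (v : V) (r : ℕ) : Finset V :=
  Finset.univ.filter (fun u => ∃ p : G.Walk v u, p.length ≤ r)

/-- The number of edges of the subgraph of `G` induced on the vertex set `S`. -/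
noncomputable def edgesWithin (G : SimpleGraph V) (S : Finset V) : ℕ :=
  (G.edgeFinset.filter (fun e => ∀ x ∈ e, x ∈ S)).card

/-- `G` is bicycle-free at radius `r`: the subgraph induced on each radius-`r` ball
(which is a connected graph) contains at most one cycle, equivalently it has at most
as many edges as vertices. -/
def BicycleFree (G : SimpleGraph V) (r : ℕ) : Prop :=
  ∀ v : V, edgesWithin G (ball G v r) ≤ (ball G v r).card

/-- The value in `{±1}` of an edge-signing `σ : G.edgeSet → Bool` on `e` (`0` off the edges). -/
noncomputable def edgeSign (G : SimpleGraph V) (σ : G.edgeSet → Bool) (e : Sym2 V) : ℝ :=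
  if h : e ∈ G.edgeSet then (if σ ⟨e, h⟩ then 1 else -1) else 0

/-- The signed adjacency matrix of the edge-signing `σ` of `G`. -/
noncomputable def signedAdj (G : SimpleGraph V) (σ : G.edgeSet → Bool) : Matrix V V ℝ :=
  fun u v => if G.Adj u v then edgeSign G σ s(u, v) else 0

/-- The signed non-backtracking matrix of the edge-signing `σ` of `G`, indexed by
the darts (directed edges) of `G`. -/
noncomputable def nbMatrix (G : SimpleGraph V) (σ : G.edgeSet → Bool) :
    Matrix G.Dart G.Dart ℝ :=
  fun e f => if e.snd = f.fst ∧ f.snd ≠ e.fst then edgeSign G σ s(f.fst, f.snd) else 0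



/-- The 2-lift of `G` associated to the edge-signing `σ` (`σ e = true` meaning sign `+1`,
`σ e = false` meaning sign `-1`): vertices are `V × Bool`, and `(u, a)` is joined to
`(v, b)` when `{u,v}` is an edge and `b = a` for sign `+1`, `b = ¬a` for sign `-1`. -/
def twoLift (G : SimpleGraph V) (σ : Sym2 V → Bool) : SimpleGraph (V × Bool) where
  Adj p q := G.Adj p.1 q.1 ∧ q.2 = xor p.2 (!σ s(p.1, q.1))
  symm := ⟨by
    rintro ⟨u, a⟩ ⟨v, b⟩ ⟨h, hb⟩
    refine ⟨h.symm, ?_⟩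
    dsimp only at hb ⊢
    have hs : s(v, u) = s(u, v) := Sym2.eq_swap
    rw [hs]
    subst hb
    cases hσ : σ s(u, v) <;> cases a <;> simp [hσ]⟩
  loopless := ⟨by
    rintro ⟨u, a⟩ ⟨h, _⟩
    exact G.irrefl h⟩

end NearRamanujan

/-! The projection `(u, a) ↦ u` of the 2-lift is a graph homomorphism that is injective on every
neighbourhood. Hence it maps the radius-`r` ball `B` about `p` into the radius-`r` ball `S` about
the image of `p`, and over an edge `s(a, b)` of `S` lie at most `min (f a) (f b)` edges of `B`,
where `f u` counts the lifts of `u` in `B`. It remains to show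
`∑_{s(a, b) ∈ E(S)} min (f a) (f b) ≤ ∑_{u ∈ S} f u` for connected `S` with `#E(S) ≤ #S`:
deleting a leaf `u` costs at most `f u` on the left, and once no leaf is left `S` is a cycle,
where the inequality is the average of `min (f a) (f b) ≤ f a` and `min (f a) (f b) ≤ f b`. -/

namespace NearRamanujan

open Finset SimpleGraph

lemma filter_mem_mk_eq_pair {V : Type*} [DecidableEq V] {S : Finset V} {a b : V}
    (ha : a ∈ S) (hb : b ∈ S) : {x ∈ S | x ∈ s(a, b)} = {a, b} := by
  ext x
  simp only [mem_filter, Sym2.mem_iff, mem_insert, mem_singleton]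
  exact ⟨And.right, by rintro (rfl | rfl) <;> simp [*]⟩

section InducedEdges

variable {V : Type*} [Fintype V] [DecidableEq V] (G : SimpleGraph V) (S : Finset V)

noncomputable def inducedEdges : Finset (Sym2 V) :=
  G.edgeFinset.filter (fun e => ∀ x ∈ e, x ∈ S)

variable {G S}

lemma mk_mem_inducedEdges {a b : V} :
    s(a, b) ∈ inducedEdges G S ↔ G.Adj a b ∧ a ∈ S ∧ b ∈ S := by
  simp [inducedEdges]

lemma exists_eq_mk_of_mem_inducedEdges {e : Sym2 V} (he : e ∈ inducedEdges G S) :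
    ∃ a b, e = s(a, b) ∧ G.Adj a b ∧ a ∈ S ∧ b ∈ S := by
  induction e using Sym2.ind with
  | _ a b => exact ⟨a, b, rfl, mk_mem_inducedEdges.mp he⟩

lemma inducedEdges_erase (u : V) :
    inducedEdges G (S.erase u) = {e ∈ inducedEdges G S | u ∉ e} := by
  ext e
  simp only [inducedEdges, mem_filter, mem_erase]
  exact ⟨fun ⟨he, h⟩ => ⟨⟨he, fun x hx => (h x hx).2⟩, fun hu => (h u hu).1 rfl⟩,
    fun ⟨⟨he, h⟩, hu⟩ => ⟨he, fun x hx => ⟨fun hxu => hu (hxu ▸ hx), h x hx⟩⟩⟩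

lemma inducedEdges_eq_empty_of_card_le_one (hS : #S ≤ 1) : inducedEdges G S = ∅ := by
  refine eq_empty_of_forall_notMem fun e he => ?_
  obtain ⟨a, b, -, hab, ha, hb⟩ := exists_eq_mk_of_mem_inducedEdges he
  exact hab.ne (card_le_one.mp hS a ha b hb)

lemma sum_mul_card_incident (g : V → ℕ) :
    ∑ u ∈ S, #{e ∈ inducedEdges G S | u ∈ e} * g u =
      ∑ e ∈ inducedEdges G S, ∑ x ∈ S with x ∈ e, g x := by
  simp only [card_filter, sum_mul, sum_filter, ite_mul, one_mul, zero_mul]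
  exact sum_comm

lemma sum_card_incident :
    ∑ u ∈ S, #{e ∈ inducedEdges G S | u ∈ e} = 2 * #(inducedEdges G S) := by
  have h := sum_mul_card_incident (G := G) (S := S) (fun _ => 1)
  simp only [mul_one, sum_const, smul_eq_mul] at h
  rw [h, mul_comm, ← smul_eq_mul, ← sum_const]
  refine sum_congr rfl fun e he => ?_
  obtain ⟨a, b, rfl, hab, ha, hb⟩ := exists_eq_mk_of_mem_inducedEdges he
  rw [filter_mem_mk_eq_pair ha hb, card_pair hab.ne]

lemma one_le_card_incident (hS : (G.induce (S : Set V)).Preconnected) {u : V} (hu : u ∈ S)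
    (hcard : 1 < #S) : 1 ≤ #{e ∈ inducedEdges G S | u ∈ e} := by
  have : Nontrivial S := (one_lt_card_iff_nontrivial.mp hcard).coe_sort
  obtain ⟨⟨w, hw⟩, huw⟩ := hS.exists_adj_of_nontrivial ⟨u, hu⟩
  refine card_pos.mpr ⟨s(u, w), mem_filter.mpr ⟨?_, Sym2.mem_mk_left u w⟩⟩
  exact mk_mem_inducedEdges.mpr ⟨huw, hu, hw⟩

lemma preconnected_induce_erase (hS : (G.induce (S : Set V)).Preconnected) {u : V} (huS : u ∈ S)
    (hu : #{e ∈ inducedEdges G S | u ∈ e} ≤ 1) :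
    (G.induce (S.erase u : Set V)).Preconnected := by
  have hnbr : ∀ v ∈ S, ∀ w ∈ S, G.Adj u v → G.Adj u w → v = w := fun v hv w hw huv huw =>
    Sym2.congr_right.mp <| card_le_one.mp hu _
      (mem_filter.mpr ⟨mk_mem_inducedEdges.mpr ⟨huv, huS, hv⟩, Sym2.mem_mk_left u v⟩) _
      (mem_filter.mpr ⟨mk_mem_inducedEdges.mpr ⟨huw, huS, hw⟩, Sym2.mem_mk_left u w⟩)
  have hleaf := hS.induce_of_degree_eq_one (s := {x | x.1 ≠ u}) fun x hx v hv w hw =>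
    Subtype.ext (hnbr v v.2 w w.2 (by simp_all) (by simp_all))
  let ψ : (G.induce (S : Set V)).induce {x | x.1 ≠ u} →g G.induce (S.erase u : Set V) :=
    ⟨fun x => ⟨x.1.1, mem_coe.mpr (mem_erase.mpr ⟨x.2, x.1.2⟩)⟩, id⟩
  refine hleaf.map ψ fun ⟨x, hx⟩ => ?_
  obtain ⟨hxu, hxS⟩ := mem_erase.mp hx
  exact ⟨⟨⟨x, hxS⟩, hxu⟩, rfl⟩

end InducedEdges

section WeightedEdgeBound

variable {V : Type*} [Fintype V] [DecidableEq V] {G : SimpleGraph V} {S : Finset V}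

lemma inf_map_le_of_mem {α : Type*} (f : α → ℕ) {e : Sym2 α} {u : α} (hu : u ∈ e) :
    (e.map f).inf ≤ f u := by
  obtain ⟨y, rfl⟩ := Sym2.mem_iff_exists.mp hu
  exact min_le_left _ _

lemma sum_inf_le_sum_of_two_le_card_incident (f : V → ℕ)
    (hdeg : ∀ u ∈ S, 2 ≤ #{e ∈ inducedEdges G S | u ∈ e}) (hcard : #(inducedEdges G S) ≤ #S) :
    ∑ e ∈ inducedEdges G S, (e.map f).inf ≤ ∑ u ∈ S, f u := by
  have hreg : ∀ u ∈ S, #{e ∈ inducedEdges G S | u ∈ e} = 2 := by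
    have hle : ∑ u ∈ S, #{e ∈ inducedEdges G S | u ∈ e} ≤ ∑ _u ∈ S, 2 := by
      rw [sum_card_incident, sum_const, smul_eq_mul]
      omega
    exact fun u hu => ((sum_eq_sum_iff_of_le hdeg).mp (le_antisymm (sum_le_sum hdeg) hle)
      u hu).symm
  have hedge : ∀ e ∈ inducedEdges G S, 2 * (e.map f).inf ≤ ∑ x ∈ S with x ∈ e, f x := by
    intro e he
    obtain ⟨a, b, rfl, hab, ha, hb⟩ := exists_eq_mk_of_mem_inducedEdges he
    rw [filter_mem_mk_eq_pair ha hb, sum_pair hab.ne]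
    simp only [Sym2.map_mk, Sym2.inf_mk]
    omega
  suffices 2 * ∑ e ∈ inducedEdges G S, (e.map f).inf ≤ 2 * ∑ u ∈ S, f u by omega
  calc 2 * ∑ e ∈ inducedEdges G S, (e.map f).inf
      ≤ ∑ e ∈ inducedEdges G S, ∑ x ∈ S with x ∈ e, f x := by
        rw [mul_sum]; exact sum_le_sum hedge
    _ = ∑ u ∈ S, #{e ∈ inducedEdges G S | u ∈ e} * f u := (sum_mul_card_incident f).symm
    _ = 2 * ∑ u ∈ S, f u := by rw [mul_sum]; exact sum_congr rfl fun u hu => by rw [hreg u hu]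

theorem sum_inf_le_sum_of_card_inducedEdges_le (f : V → ℕ)
    (hS : (G.induce (S : Set V)).Preconnected) (hcard : #(inducedEdges G S) ≤ #S) :
    ∑ e ∈ inducedEdges G S, (e.map f).inf ≤ ∑ u ∈ S, f u := by
  induction S using Finset.strongInduction with
  | H S ih =>
  by_cases hS1 : #S ≤ 1
  · simp [inducedEdges_eq_empty_of_card_le_one hS1]
  by_cases hleaf : ∃ u ∈ S, #{e ∈ inducedEdges G S | u ∈ e} ≤ 1
  swap
  · push Not at hleaf
    exact sum_inf_le_sum_of_two_le_card_incident f hleaf hcard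
  obtain ⟨u, hu, hdeg⟩ := hleaf
  have hdeg1 : #{e ∈ inducedEdges G S | u ∈ e} = 1 :=
    le_antisymm hdeg (one_le_card_incident hS hu (by omega))
  have hsplit := card_filter_add_card_filter_not (s := inducedEdges G S) (fun e => u ∈ e)
  have hrest := ih (S.erase u) (erase_ssubset hu) (preconnected_induce_erase hS hu hdeg) (by
    rw [inducedEdges_erase, card_erase_of_mem hu]
    omega)
  have hleaf_sum : ∑ e ∈ inducedEdges G S with u ∈ e, (e.map f).inf ≤ f u := by
    have := sum_le_card_nsmul {e ∈ inducedEdges G S | u ∈ e} (fun e => (e.map f).inf) (f u)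
      fun e he => inf_map_le_of_mem f (mem_filter.mp he).2
    rwa [hdeg1, one_nsmul] at this
  rw [inducedEdges_erase] at hrest
  rw [← sum_filter_add_sum_filter_not (inducedEdges G S) (fun e => u ∈ e),
    ← add_sum_erase _ _ hu]
  omega

end WeightedEdgeBound

section Balls

variable {V : Type*} [Fintype V] {G : SimpleGraph V} {v x : V} {r : ℕ}

lemma mem_ball : x ∈ ball G v r ↔ ∃ p : G.Walk v x, p.length ≤ r := by
  simp [ball]

lemma map_mem_ball {W : Type*} [Fintype W] {H : SimpleGraph W} (φ : H →g G)
    {p q : W} (hq : q ∈ ball H p r) : φ q ∈ ball G (φ p) r := by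
  obtain ⟨w, hw⟩ := mem_ball.mp hq
  exact mem_ball.mpr ⟨w.map φ, (w.length_map φ).trans_le hw⟩

lemma preconnected_induce_ball (G : SimpleGraph V) (v : V) (r : ℕ) :
    (G.induce (ball G v r : Set V)).Preconnected := by
  have hv : v ∈ ball G v r := mem_ball.mpr ⟨.nil, Nat.zero_le r⟩
  have hreach : ∀ x : (ball G v r : Set V),
      (G.induce (ball G v r : Set V)).Reachable ⟨v, hv⟩ x := by
    rintro ⟨x, hx⟩
    obtain ⟨w, hw⟩ := mem_ball.mp hx
    exact ⟨w.induce _ fun z hz =>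
      mem_ball.mpr ⟨w.takeUntil z hz, (w.length_takeUntil_le_length hz).trans hw⟩⟩
  exact fun x y => (hreach x).symm.trans (hreach y)

end Balls

section LocallyInjectiveHom

variable {V W : Type*} [Fintype W] [DecidableEq W] {G : SimpleGraph V} {H : SimpleGraph W}
  (φ : H →g G)

lemma card_fiber_inducedEdges_le [DecidableEq V] (hφ : ∀ p, Set.InjOn φ (H.neighborSet p))
    (B : Finset W) (a b : V) :
    #{ε ∈ inducedEdges H B | ε.map φ = s(a, b)} ≤ #{q ∈ B | φ q = a} := by
  refine card_le_card_of_forall_subsingleton (fun ε q => q ∈ ε) (fun ε hε => ?_) ?_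
  · obtain ⟨hε, hεab⟩ := mem_filter.mp hε
    obtain ⟨p, q, rfl, -, hp, hq⟩ := exists_eq_mk_of_mem_inducedEdges hε
    rcases Sym2.eq_iff.mp hεab with ⟨hpa, -⟩ | ⟨-, hqa⟩
    · exact ⟨p, mem_filter.mpr ⟨hp, hpa⟩, Sym2.mem_mk_left p q⟩
    · exact ⟨q, mem_filter.mpr ⟨hq, hqa⟩, Sym2.mem_mk_right p q⟩
  · intro q hq
    have hqa := (mem_filter.mp hq).2
    have hother : ∀ ε ∈ inducedEdges H B, ε.map φ = s(a, b) → q ∈ ε →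
        ∃ x, ε = s(q, x) ∧ H.Adj q x ∧ φ x = b := by
      intro ε hε hεab hqε
      obtain ⟨x, rfl⟩ := Sym2.mem_iff_exists.mp hqε
      refine ⟨x, rfl, (mk_mem_inducedEdges.mp hε).1, ?_⟩
      rw [Sym2.map_mk, hqa] at hεab
      exact Sym2.congr_right.mp hεab
    rintro ε₁ ⟨hε₁, hqε₁⟩ ε₂ ⟨hε₂, hqε₂⟩
    obtain ⟨x, rfl, hqx, hx⟩ := hother ε₁ (mem_filter.mp hε₁).1 (mem_filter.mp hε₁).2 hqε₁
    obtain ⟨y, rfl, hqy, hy⟩ := hother ε₂ (mem_filter.mp hε₂).1 (mem_filter.mp hε₂).2 hqε₂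
    rw [hφ q hqx hqy (hx.trans hy.symm)]

theorem card_inducedEdges_le_sum_inf [Fintype V] [DecidableEq V]
    (hφ : ∀ p, Set.InjOn φ (H.neighborSet p)) {B : Finset W} {S : Finset V}
    (hBS : ∀ q ∈ B, φ q ∈ S) :
    #(inducedEdges H B) ≤ ∑ e ∈ inducedEdges G S, (e.map fun u => #{q ∈ B | φ q = u}).inf := by
  have hmaps : ∀ ε ∈ inducedEdges H B, ε.map φ ∈ inducedEdges G S := by
    intro ε hε
    obtain ⟨p, q, rfl, hpq, hp, hq⟩ := exists_eq_mk_of_mem_inducedEdges hε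
    exact mk_mem_inducedEdges.mpr ⟨φ.map_adj hpq, hBS p hp, hBS q hq⟩
  rw [card_eq_sum_card_fiberwise hmaps]
  refine sum_le_sum fun e he => ?_
  obtain ⟨a, b, rfl, -⟩ := exists_eq_mk_of_mem_inducedEdges he
  rw [Sym2.map_mk, Sym2.inf_mk]
  refine le_min (card_fiber_inducedEdges_le φ hφ B a b) ?_
  rw [Sym2.eq_swap]
  exact card_fiber_inducedEdges_le φ hφ B b a

theorem BicycleFree.of_hom [Fintype V] [DecidableEq V]
    (hφ : ∀ p, Set.InjOn φ (H.neighborSet p)) {r : ℕ} (hG : BicycleFree G r) : BicycleFree H r := by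
  intro p
  have hBS : ∀ q ∈ ball H p r, φ q ∈ ball G (φ p) r := fun q hq => map_mem_ball φ hq
  calc #(inducedEdges H (ball H p r))
      ≤ ∑ e ∈ inducedEdges G (ball G (φ p) r), (e.map fun u => #{q ∈ ball H p r | φ q = u}).inf :=
        card_inducedEdges_le_sum_inf φ hφ hBS
    _ ≤ ∑ u ∈ ball G (φ p) r, #{q ∈ ball H p r | φ q = u} :=
        sum_inf_le_sum_of_card_inducedEdges_le _ (preconnected_induce_ball G (φ p) r) (hG (φ p))
    _ = #(ball H p r) := (card_eq_sum_card_fiberwise hBS).symm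

end LocallyInjectiveHom

variable {V : Type*}

def twoLiftProj (G : SimpleGraph V) (σ : Sym2 V → Bool) : twoLift G σ →g G :=
  ⟨Prod.fst, And.left⟩

lemma injOn_twoLiftProj_neighborSet (G : SimpleGraph V) (σ : Sym2 V → Bool) (p : V × Bool) :
    Set.InjOn (twoLiftProj G σ) ((twoLift G σ).neighborSet p) := fun q hq q' hq' hqq' =>
  Prod.ext hqq' (by rw [hq.2, hq'.2]; exact congrArg (fun x => xor p.2 (!σ s(p.1, x))) hqq')

/-- Proposition 2.9.  If `G` is bicycle-free at radius `r` and `G₂` is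
the 2-lift of `G` associated to an edge-signing `w : E → {±1}`, then `G₂` is bicycle-free
at radius `r`. -/
theorem twoLift_bicycleFree {V : Type*} [Fintype V] [DecidableEq V]
    (G : SimpleGraph V) (σ : Sym2 V → Bool) (r : ℕ) (h : BicycleFree G r) :
    BicycleFree (twoLift G σ) r :=
  h.of_hom (twoLiftProj G σ) (injOn_twoLiftProj_neighborSet G σ)

end NearRamanujan
end

section
/- Let H be a graph on v vertices that is bicycle-free at radius r, and assume r ≥ 10·ln v. Then the excess of H satisfies exc(H) ≤ (ln(e·v)/r)·v. -/
/-!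
Deleting a vertex with at most one neighbour does not decrease the excess, so it suffices to bound
`|E(Γ)| - |T|` for the graph `Γ` induced on a set `T` in which no vertex has degree one.
Let `N_t(d)` count the non-backtracking continuations of length `t` of a dart `d` of `Γ`.
Jensen's inequality along the non-backtracking operator gives
`∑_d log N_t(d) ≥ t ∑_v deg v · log (deg v - 1) ≥ 4t (|E(Γ)| - |T|)`, the last step by
`(x + 1) log x ≥ 2 (x - 1)`.

On the other hand a radius-`r` ball of `H` spans at most as many edges as vertices, so it becomes a
forest after deleting one edge `e`. A non-backtracking walk in it is then determined by its ends,
its length and the direction in which it first crosses `e`, so there are at most three of each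
length `≤ r` between two vertices, and `N_{r-1}(d) ≤ 3|V|`. Comparing the two bounds gives
`2 (r - 1) k ≤ (k + |V|) log (3|V|)` for `k = |E(Γ)| - |T|`, and `r ≥ 10 log |V|` turns this
into `k ≤ log (e|V|) / r · |V|`.
-/

open scoped Classical

namespace Real

theorem log_card_add_sum_log_div_card_le_log_sum {ι : Type*} {s : Finset ι} (hs : s.Nonempty)
    {z : ι → ℝ} (hz : ∀ i ∈ s, 0 < z i) :
    log s.card + (∑ i ∈ s, log (z i)) / s.card ≤ log (∑ i ∈ s, z i) := by
  have hn : (0 : ℝ) < s.card := by exact_mod_cast hs.card_pos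
  have hjensen := strictConcaveOn_log_Ioi.concaveOn.le_map_sum (t := s)
    (w := fun _ => (s.card : ℝ)⁻¹) (p := z) (fun _ _ => by positivity)
    (by simp [Finset.sum_const, hn.ne']) hz
  simp only [smul_eq_mul, ← Finset.mul_sum] at hjensen
  rw [log_mul (inv_pos.2 hn).ne' (Finset.sum_pos hz hs).ne', log_inv] at hjensen
  rw [div_eq_inv_mul]
  linarith

/-- The first term of the series `log x = 2 artanh ((x - 1) / (x + 1))`. -/
theorem two_mul_sub_one_le_add_one_mul_log {x : ℝ} (hx : 1 ≤ x) :
    2 * (x - 1) ≤ (x + 1) * log x := by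
  rcases hx.eq_or_lt with rfl | hx
  · simp
  have h := le_hasSum (hasSum_log_one_add_inv (inv_pos.2 (sub_pos.2 hx))) 0
    fun _ _ => by positivity
  have hx₁ : x - 1 ≠ 0 := by linarith
  have : 2 * (x - 1)⁻¹ + 1 = (x + 1) / (x - 1) := by field_simp; ring
  simp only [inv_inv, add_sub_cancel, this] at h
  norm_num at h
  rw [← mul_div_assoc, div_le_iff₀ (by linarith)] at h
  linarith

/-- For `n = 0, 1` this holds because `log 0 = log (-1) = 0`. -/
theorem two_mul_sub_two_le_mul_log (n : ℕ) : 2 * ((n : ℝ) - 2) ≤ n * log (n - 1) := by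
  rcases Nat.lt_or_ge n 2 with hn | hn
  · interval_cases n <;> norm_num
  · have : (2 : ℝ) ≤ n := by exact_mod_cast hn
    have := two_mul_sub_one_le_add_one_mul_log (x := n - 1) (by linarith)
    ring_nf at this ⊢
    linarith

end Real

namespace SimpleGraph

open Finset Real

variable {V : Type*} {G : SimpleGraph V}

theorem spanningCoe_induce_adj {s : Set V} {u v : V} :
    (G.induce s).spanningCoe.Adj u v ↔ G.Adj u v ∧ u ∈ s ∧ v ∈ s := by
  simp

theorem two_le_card_of_card_lt_card_edgeFinset [Fintype V] [Fintype G.edgeSet]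
    (h : Fintype.card V < G.edgeFinset.card) : 2 ≤ Fintype.card V := by
  by_contra! hV
  have := G.card_edgeFinset_le_card_choose_two
  rw [Nat.choose_eq_zero_of_lt hV] at this
  omega

/-! ### Non-backtracking walks -/

namespace Walk

variable {u v w x : V}

/-- Consecutive edges are distinct: for a walk in a simple graph this says exactly that it never
immediately returns along the edge it has just used. -/
def IsNonBacktracking (p : G.Walk u v) : Prop :=
  p.edges.IsChain (· ≠ ·)

theorem isNonBacktracking_cons_iff (h : G.Adj u v) (p : G.Walk v w) :
    (cons h p).IsNonBacktracking ↔
      (∀ e ∈ p.edges.head?, s(u, v) ≠ e) ∧ p.IsNonBacktracking :=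
  List.isChain_cons

theorem isNonBacktracking_cons_cons_iff (h : G.Adj u v) (h' : G.Adj v w) (p : G.Walk w x) :
    (cons h (cons h' p)).IsNonBacktracking ↔ u ≠ w ∧ (cons h' p).IsNonBacktracking := by
  simp [isNonBacktracking_cons_iff (p := cons h' p), h.ne]

theorem IsNonBacktracking.of_cons {h : G.Adj u v} {p : G.Walk v w}
    (hp : (cons h p).IsNonBacktracking) : p.IsNonBacktracking :=
  ((isNonBacktracking_cons_iff h p).1 hp).2

theorem IsNonBacktracking.of_append_left {p : G.Walk u v} {q : G.Walk v w}
    (h : (p.append q).IsNonBacktracking) : p.IsNonBacktracking := by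
  unfold IsNonBacktracking at *
  rw [edges_append] at h
  exact h.left_of_append

theorem IsNonBacktracking.of_append_right {p : G.Walk u v} {q : G.Walk v w}
    (h : (p.append q).IsNonBacktracking) : q.IsNonBacktracking := by
  unfold IsNonBacktracking at *
  rw [edges_append] at h
  exact h.right_of_append

@[simp]
theorem isNonBacktracking_transfer {H : SimpleGraph V} (p : G.Walk u v) (hp) :
    (p.transfer H hp).IsNonBacktracking ↔ p.IsNonBacktracking := by
  simp [IsNonBacktracking, edges_transfer]

noncomputable def firstDartOn (e : Sym2 V) (p : G.Walk u v) : Option G.Dart :=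
  p.darts.find? (·.edge = e)

variable {e : Sym2 V}

theorem firstDartOn_eq_none_iff {p : G.Walk u v} : p.firstDartOn e = none ↔ e ∉ p.edges := by
  simp [firstDartOn, edges]

theorem edge_eq_of_firstDartOn_eq_some {p : G.Walk u v} {d : G.Dart}
    (h : p.firstDartOn e = some d) : d.edge = e := by
  simpa using List.find?_some h

theorem exists_eq_append_cons_of_firstDartOn_eq_some {p : G.Walk u v} {d : G.Dart}
    (h : p.firstDartOn e = some d) :
    ∃ (P : G.Walk u d.fst) (q : G.Walk d.snd v),
      p = P.append (cons d.adj q) ∧ e ∉ P.edges := by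
  induction p with
  | nil => simp [firstDartOn] at h
  | @cons a b c hab p ih =>
    by_cases hd : s(a, b) = e
    · obtain rfl : d = ⟨(a, b), hab⟩ := by simpa [firstDartOn, hd] using h.symm
      exact ⟨nil, p, rfl, by simp⟩
    · obtain ⟨P, q, rfl, hP⟩ := ih (by simpa [firstDartOn, hd] using h)
      exact ⟨cons hab P, q, rfl, by simp [Ne.symm hd, hP]⟩

end Walk

open Walk

theorem IsAcyclic.isPath_of_isNonBacktracking (hG : G.IsAcyclic) {u v : V} {p : G.Walk u v}
    (hp : p.IsNonBacktracking) : p.IsPath :=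
  (hG.isPath_iff_isChain p).2 hp

theorem IsAcyclic.length_eq_dist_of_isPath (hG : G.IsAcyclic) {u v : V} {p : G.Walk u v}
    (hp : p.IsPath) : p.length = G.dist u v := by
  obtain ⟨q, hq, hqlen⟩ := p.reachable.exists_path_of_dist
  have : (⟨p, hp⟩ : G.Path u v) = ⟨q, hq⟩ := (hG.subsingleton_path u v).elim _ _
  rw [← hqlen, show p = q from congrArg Subtype.val this]

/-! ### Graphs that become forests after deleting one edge -/

theorem Reachable.exists_adj_dist_lt {u w : V} (h : G.Reachable u w) (hw : u ≠ w) :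
    ∃ y, G.Adj y w ∧ G.dist u y < G.dist u w := by
  obtain ⟨p, hp⟩ := h.exists_walk_length_eq_dist
  have hnil : ¬p.Nil := fun hn => hw hn.eq
  refine ⟨p.penultimate, p.adj_penultimate hnil, ?_⟩
  have := dist_le p.dropLast
  have := p.length_dropLast_add_one hnil
  omega

/-- Each vertex `w ≠ u` reachable from `u` has a neighbour closer to `u`; the edge to it
determines `w` as its endpoint farther from `u`. -/
theorem card_le_card_edgeFinset_add_one [Fintype G.edgeSet] {u : V} (X : Finset V)
    (hX : ∀ x ∈ X, G.Reachable u x) : X.card ≤ G.edgeFinset.card + 1 := by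
  have hparent : ∀ w ∈ X.erase u, ∃ y, G.Adj y w ∧ G.dist u y < G.dist u w := fun w hw =>
    (hX w (mem_of_mem_erase hw)).exists_adj_dist_lt (ne_of_mem_erase hw).symm
  choose y hadj hlt using hparent
  have hinj : Set.InjOn (fun w : X.erase u => s(y w w.2, w)) (X.erase u).attach := by
    rintro ⟨w₁, h₁⟩ - ⟨w₂, h₂⟩ - heq
    have := hlt w₁ h₁
    have := hlt w₂ h₂
    rcases Sym2.eq_iff.1 heq with ⟨-, h⟩ | ⟨h₁₂, h₂₁⟩
    · exact Subtype.ext h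
    · simp only [h₁₂, ← h₂₁] at *
      omega
  have hmaps : Set.MapsTo (fun w : X.erase u => s(y w w.2, w)) (X.erase u).attach
      G.edgeFinset := fun w _ => by simpa using hadj w w.2
  have := card_le_card_of_injOn _ hmaps hinj
  rw [card_attach] at this
  have := pred_card_le_card_erase (s := X) (a := u)
  omega

/-- A spanning forest of `G` has at least `|X| - 1 ≥ |E(G)| - 1` edges, so it misses at most one
edge of `G`. -/
theorem exists_isAcyclic_deleteEdges [Fintype G.edgeSet] {u : V} (X : Finset V)
    (hX : ∀ x ∈ X, G.Reachable u x) (hcard : G.edgeFinset.card ≤ X.card) :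
    ∃ e, (G.deleteEdges {e}).IsAcyclic := by
  obtain ⟨F, hFG, hF, hreach⟩ := G.exists_isAcyclic_reachable_eq_le
  have : Finite F.edgeSet := Finite.Set.subset _ (edgeSet_mono hFG)
  have : Fintype F.edgeSet := Fintype.ofFinite _
  have hFX := card_le_card_edgeFinset_add_one (G := F) X fun x hx => hreach ▸ hX x hx
  have hsub : F.edgeFinset ⊆ G.edgeFinset := edgeFinset_mono hFG
  have hle : (G.edgeFinset \ F.edgeFinset).card ≤ 1 := by
    rw [card_sdiff_of_subset hsub]
    omega
  have : Nonempty (Sym2 V) := ⟨s(u, u)⟩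
  obtain ⟨e, he⟩ := card_le_one_iff_subset_singleton.1 hle
  refine ⟨e, hF.anti fun a b hab => ?_⟩
  rw [deleteEdges_adj, Set.mem_singleton_iff] at hab
  by_contra hF'
  exact hab.2 (mem_singleton.1 (he (mem_sdiff.2 ⟨by simpa using hab.1, by simpa using hF'⟩)))

section ForestPlusEdge

variable {e : Sym2 V} (hF : (G.deleteEdges {e}).IsAcyclic)
include hF

theorem isPath_toDeleteEdge {u v : V} {p : G.Walk u v} (hp : p.IsNonBacktracking)
    (hpe : e ∉ p.edges) : (p.toDeleteEdge e hpe).IsPath :=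
  hF.isPath_of_isNonBacktracking ((isNonBacktracking_transfer _ _).2 hp)

theorem eq_of_isNonBacktracking_of_notMem_edges {u v : V} {p q : G.Walk u v}
    (hp : p.IsNonBacktracking) (hq : q.IsNonBacktracking) (hpe : e ∉ p.edges)
    (hqe : e ∉ q.edges) : p = q := by
  have : (⟨_, isPath_toDeleteEdge hF hp hpe⟩ : (G.deleteEdges {e}).Path u v) =
      ⟨_, isPath_toDeleteEdge hF hq hqe⟩ := (hF.subsingleton_path u v).elim _ _
  apply edges_injective
  simpa using congrArg (fun r : (G.deleteEdges {e}).Path u v => r.1.edges) this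

theorem length_eq_dist_of_isNonBacktracking_of_notMem_edges {u v : V} {p : G.Walk u v}
    (hp : p.IsNonBacktracking) (hpe : e ∉ p.edges) :
    p.length = (G.deleteEdges {e}).dist u v := by
  simpa using hF.length_eq_dist_of_isPath (isPath_toDeleteEdge hF hp hpe)

/-- Crossing `e` back along `d.symm` would first need a closed walk at `d.snd` in the forest,
which is trivial, so the walk would backtrack. -/
theorem firstDartOn_eq_none_or_eq_of_isNonBacktracking_cons {d : G.Dart} (hd : d.edge = e)
    {v : V} {q : G.Walk d.snd v} (hq : (cons d.adj q).IsNonBacktracking) :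
    q.firstDartOn e = none ∨ q.firstDartOn e = some d := by
  cases h : q.firstDartOn e with
  | none => exact Or.inl rfl
  | some d' =>
    rcases (dart_edge_eq_iff d' d).1 ((edge_eq_of_firstDartOn_eq_some h).trans hd.symm)
      with rfl | rfl
    · exact Or.inr rfl
    · obtain ⟨P, q', rfl, hP⟩ := exists_eq_append_cons_of_firstDartOn_eq_some h
      have hPlen : P.length = 0 := by
        rw [length_eq_dist_of_isNonBacktracking_of_notMem_edges hF hq.of_cons.of_append_left hP]
        exact dist_self
      have hPedges : P.edges = [] := by rw [← List.length_eq_zero_iff, length_edges, hPlen]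
      simp [IsNonBacktracking, edges_append, hPedges, Sym2.eq_swap] at hq

theorem dist_lt_length_of_firstDartOn_eq_some {d : G.Dart} {v : V} {q : G.Walk d.snd v}
    (hq : q.IsNonBacktracking) (h : q.firstDartOn e = some d) :
    (G.deleteEdges {e}).dist d.snd v < q.length := by
  obtain ⟨P, q', rfl, -⟩ := exists_eq_append_cons_of_firstDartOn_eq_some h
  have hq' := hq.of_append_right
  have : (G.deleteEdges {e}).dist d.snd v ≤ q'.length := by
    rcases firstDartOn_eq_none_or_eq_of_isNonBacktracking_cons hF
      (edge_eq_of_firstDartOn_eq_some h) hq' with h' | h'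
    · exact (length_eq_dist_of_isNonBacktracking_of_notMem_edges hF hq'.of_cons
        (firstDartOn_eq_none_iff.1 h')).ge
    · exact (dist_lt_length_of_firstDartOn_eq_some hq'.of_cons h').le
  simp only [length_append, length_cons]
  omega
termination_by q.length
decreasing_by subst_vars; simp only [length_append, length_cons]; omega

theorem firstDartOn_eq_none_iff_length_eq_dist {d : G.Dart} (hd : d.edge = e) {v : V}
    {q : G.Walk d.snd v} (hq : (cons d.adj q).IsNonBacktracking) :
    q.firstDartOn e = none ↔ q.length = (G.deleteEdges {e}).dist d.snd v := by
  refine ⟨fun h => length_eq_dist_of_isNonBacktracking_of_notMem_edges hF hq.of_cons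
    (firstDartOn_eq_none_iff.1 h), fun hlen => ?_⟩
  refine (firstDartOn_eq_none_or_eq_of_isNonBacktracking_cons hF hd hq).resolve_right fun h => ?_
  have := dist_lt_length_of_firstDartOn_eq_some hF hq.of_cons h
  omega

theorem eq_of_firstDartOn_eq {u v : V} {p q : G.Walk u v} (hp : p.IsNonBacktracking)
    (hq : q.IsNonBacktracking) (hlen : p.length = q.length)
    (h : p.firstDartOn e = q.firstDartOn e) : p = q := by
  cases hpd : p.firstDartOn e with
  | none =>
    rw [hpd] at h
    exact eq_of_isNonBacktracking_of_notMem_edges hF hp hq (firstDartOn_eq_none_iff.1 hpd)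
      (firstDartOn_eq_none_iff.1 h.symm)
  | some d =>
    rw [hpd] at h
    have hd := edge_eq_of_firstDartOn_eq_some hpd
    obtain ⟨P, p', rfl, hP⟩ := exists_eq_append_cons_of_firstDartOn_eq_some hpd
    obtain ⟨Q, q', rfl, hQ⟩ := exists_eq_append_cons_of_firstDartOn_eq_some h.symm
    obtain rfl : P = Q :=
      eq_of_isNonBacktracking_of_notMem_edges hF hp.of_append_left hq.of_append_left hP hQ
    have hp' := hp.of_append_right
    have hq' := hq.of_append_right
    have hlen' : p'.length = q'.length := by simpa using hlen
    have hnone : p'.firstDartOn e = none ↔ q'.firstDartOn e = none := by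
      rw [firstDartOn_eq_none_iff_length_eq_dist hF hd hp',
        firstDartOn_eq_none_iff_length_eq_dist hF hd hq', hlen']
    have : p'.firstDartOn e = q'.firstDartOn e := by
      rcases firstDartOn_eq_none_or_eq_of_isNonBacktracking_cons hF hd hp' with h₁ | h₁ <;>
        rcases firstDartOn_eq_none_or_eq_of_isNonBacktracking_cons hF hd hq' with h₂ | h₂ <;>
        simp_all
    rw [eq_of_firstDartOn_eq hp'.of_cons hq'.of_cons hlen' this]
termination_by p.length
decreasing_by subst_vars; simp only [length_append, length_cons]; omega

/-- By `eq_of_firstDartOn_eq`, such a walk is determined by whether and in which direction it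
first crosses `e`. -/
theorem card_filter_isNonBacktracking_le_three [DecidableEq V] [G.LocallyFinite] (L : ℕ)
    (u v : V) : ((G.finsetWalkLength L u v).filter (·.IsNonBacktracking)).card ≤ 3 := by
  induction e using Sym2.ind with
  | _ a b => ?_
  refine (card_le_card_of_injOn (fun p => (p.firstDartOn s(a, b)).map Dart.toProd)
    (t := {none, some (a, b), some (b, a)}) ?_ ?_).trans card_le_three
  · intro p _
    cases h : p.firstDartOn s(a, b) with
    | none => simp [h]
    | some d =>
      have hd := edge_eq_of_firstDartOn_eq_some h
      obtain ⟨h₁, h₂⟩ | ⟨h₁, h₂⟩ := Sym2.eq_iff.1 hd <;> simp [h, Prod.ext_iff, h₁, h₂]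
  · intro p hp q hq hpq
    simp only [coe_filter, mem_finsetWalkLength_iff, Set.mem_ofPred_eq] at hp hq
    exact eq_of_firstDartOn_eq hF hp.2 hq.2 (hp.1.trans hq.1.symm)
      (Option.map_injective Dart.toProd_injective hpq)

end ForestPlusEdge

/-! ### Counting non-backtracking continuations of darts -/

section NonBacktrackingCount

variable [Fintype V] [DecidableRel G.Adj]

variable (G) in
noncomputable def nbSucc (d : G.Dart) : Finset G.Dart :=
  {d' | d'.fst = d.snd ∧ d'.snd ≠ d.fst}

theorem mem_nbSucc {d d' : G.Dart} : d' ∈ G.nbSucc d ↔ d'.fst = d.snd ∧ d'.snd ≠ d.fst := by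
  simp [nbSucc]

theorem mem_nbSucc_symm {d d' : G.Dart} : d' ∈ G.nbSucc d ↔ d.symm ∈ G.nbSucc d'.symm := by
  simp only [mem_nbSucc, Dart.symm_toProd, Prod.fst_swap, Prod.snd_swap]
  exact and_congr eq_comm ne_comm

theorem card_nbSucc (d : G.Dart) : (G.nbSucc d).card = G.degree d.snd - 1 := by
  have : G.nbSucc d = ({d' | d'.fst = d.snd} : Finset G.Dart).erase d.symm := by
    ext d'
    simp only [mem_nbSucc, mem_erase, mem_filter, mem_univ, true_and, ne_eq, Dart.ext_iff,
      Prod.ext_iff, Dart.symm_toProd, Prod.fst_swap, Prod.snd_swap]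
    tauto
  rw [this, card_erase_of_mem (by simp)]
  convert congrArg (· - 1) (G.dart_fst_fiber_card_eq_degree d.snd)

theorem card_filter_mem_nbSucc (d' : G.Dart) :
    ({d | d' ∈ G.nbSucc d} : Finset G.Dart).card = G.degree d'.fst - 1 := by
  have : ({d | d' ∈ G.nbSucc d} : Finset G.Dart) =
      (G.nbSucc d'.symm).map (Dart.symm_involutive.toPerm _).toEmbedding := by
    ext d
    simp only [mem_filter, mem_univ, true_and, mem_map_equiv, Function.Involutive.toPerm_symm,
      Function.Involutive.coe_toPerm, mem_nbSucc_symm (d := d)]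
  rw [this, card_map, card_nbSucc]
  rfl

theorem two_le_degree_snd (hG : ∀ v, G.degree v ≠ 1) (d : G.Dart) : 2 ≤ G.degree d.snd := by
  have := (G.degree_pos_iff_exists_adj d.snd).2 ⟨d.fst, d.adj.symm⟩
  have := hG d.snd
  omega

theorem nbSucc_nonempty (hG : ∀ v, G.degree v ≠ 1) (d : G.Dart) : (G.nbSucc d).Nonempty := by
  rw [← card_pos, card_nbSucc]
  have := two_le_degree_snd hG d
  omega

variable (G) in
/-- The number of non-backtracking continuations of length `t` of the dart `d`. -/
noncomputable def nbCount : ℕ → G.Dart → ℕ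
  | 0, _ => 1
  | t + 1, d => ∑ d' ∈ G.nbSucc d, nbCount t d'

theorem one_le_nbCount (hG : ∀ v, G.degree v ≠ 1) :
    ∀ (t : ℕ) (d : G.Dart), 1 ≤ G.nbCount t d
  | 0, _ => le_rfl
  | t + 1, d => by
    obtain ⟨d', hd'⟩ := nbSucc_nonempty hG d
    exact (one_le_nbCount hG t d').trans (single_le_sum (fun _ _ => Nat.zero_le _) hd')

/-- Every dart `d'` has `deg d'.fst - 1` predecessors, each with that many successors. -/
theorem sum_sum_nbSucc_div_card (hG : ∀ v, G.degree v ≠ 1) (g : G.Dart → ℝ) :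
    ∑ d, (∑ d' ∈ G.nbSucc d, g d') / (G.nbSucc d).card = ∑ d', g d' := by
  simp only [sum_div]
  rw [sum_comm' (t' := univ) (s' := fun d' => ({d | d' ∈ G.nbSucc d} : Finset G.Dart))
    (by simp)]
  refine sum_congr rfl fun d' _ => ?_
  have hcard : ∀ d ∈ ({d | d' ∈ G.nbSucc d} : Finset G.Dart),
      g d' / (G.nbSucc d).card = g d' / (G.degree d'.fst - 1 : ℕ) := by
    intro d hd
    rw [card_nbSucc, (mem_nbSucc.1 (mem_filter.1 hd).2).1]
  have hdeg : ((G.degree d'.fst - 1 : ℕ) : ℝ) ≠ 0 := by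
    have : 2 ≤ G.degree d'.fst := two_le_degree_snd hG d'.symm
    exact_mod_cast (show G.degree d'.fst - 1 ≠ 0 by omega)
  rw [sum_congr rfl hcard, sum_const, card_filter_mem_nbSucc, nsmul_eq_mul,
    mul_div_cancel₀ _ hdeg]

/-- Jensen's inequality at each dart; the averages over successors then recombine by
`sum_sum_nbSucc_div_card`. -/
theorem mul_sum_log_card_nbSucc_le (hG : ∀ v, G.degree v ≠ 1) (t : ℕ) :
    t * ∑ d, log (G.nbSucc d).card ≤ ∑ d, log (G.nbCount t d) := by
  induction t with
  | zero => simp [nbCount]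
  | succ t ih =>
    have hstep : ∀ d, log (G.nbSucc d).card
        + (∑ d' ∈ G.nbSucc d, log (G.nbCount t d')) / (G.nbSucc d).card
        ≤ log (G.nbCount (t + 1) d) := fun d => by
      simpa [nbCount] using log_card_add_sum_log_div_card_le_log_sum (nbSucc_nonempty hG d)
        (z := fun d' => (G.nbCount t d' : ℝ))
        fun d' _ => by exact_mod_cast one_le_nbCount hG t d'
    have := sum_le_sum fun d (_ : d ∈ univ) => hstep d
    rw [sum_add_distrib, sum_sum_nbSucc_div_card hG] at this
    push_cast
    linarith

variable (G) in
theorem sum_log_card_nbSucc :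
    ∑ d, log (G.nbSucc d).card = ∑ v, G.degree v * log (G.degree v - 1) := by
  let φ : V → ℝ := fun v => log (G.degree v - 1)
  have h : ∀ d : G.Dart, log (G.nbSucc d).card = φ d.snd := fun d => by
    have := (G.degree_pos_iff_exists_adj d.snd).2 ⟨d.fst, d.adj.symm⟩
    simp [φ, card_nbSucc, Nat.cast_sub this]
  rw [sum_congr rfl fun d _ => h d, Fintype.sum_equiv (Dart.symm_involutive.toPerm _)
    (fun d => φ d.snd) (fun d => φ d.fst) fun _ => rfl,
    ← sum_fiberwise univ (fun d : G.Dart => d.fst)]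
  refine sum_congr rfl fun v _ => ?_
  rw [sum_congr rfl fun d hd => by rw [(mem_filter.1 hd).2], sum_const, nsmul_eq_mul]
  congr 2
  convert G.dart_fst_fiber_card_eq_degree v

theorem four_mul_sub_card_le_sum_log_card_nbSucc (T : Finset V)
    (hT : ∀ v ∉ T, G.degree v = 0) :
    4 * ((G.edgeFinset.card : ℝ) - T.card) ≤ ∑ d, log (G.nbSucc d).card := by
  have hdeg : ∑ v, (G.degree v : ℝ) = 2 * G.edgeFinset.card := by
    exact_mod_cast G.sum_degrees_eq_twice_card_edges
  calc 4 * ((G.edgeFinset.card : ℝ) - T.card)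
      = ∑ v, (2 * (G.degree v : ℝ) - 4 * if v ∈ T then 1 else 0) := by
        rw [sum_sub_distrib, ← mul_sum, ← mul_sum, hdeg, sum_boole]
        simp only [filter_mem_eq_inter, univ_inter]
        ring
    _ ≤ ∑ v, G.degree v * log (G.degree v - 1) := sum_le_sum fun v _ => by
        split_ifs with hv
        · linarith [two_mul_sub_two_le_mul_log (G.degree v)]
        · simp [hT v hv]
    _ = ∑ d, log (G.nbSucc d).card := (sum_log_card_nbSucc G).symm

variable [DecidableEq V]

variable (G) in
noncomputable def nbWalksStartingWith (n : ℕ) (u v : V) (d : G.Dart) : Finset (G.Walk u v) :=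
  {p ∈ G.finsetWalkLength n u v | p.IsNonBacktracking ∧ p.darts.head? = some d}

theorem sum_card_nbWalksStartingWith_le (n : ℕ) (d : G.Dart) (v : V) :
    ∑ d' ∈ G.nbSucc d, (G.nbWalksStartingWith (n + 1) d.snd v d').card ≤
      (G.nbWalksStartingWith (n + 2) d.fst v d).card := by
  rw [← card_biUnion]
  · refine card_le_card_of_injOn (fun p => cons d.adj p) ?_ fun p _ q _ h => by simpa using h
    intro p hp
    obtain ⟨d', hd', hp⟩ := mem_biUnion.1 (mem_coe.1 hp)
    rw [mem_coe]
    simp only [nbWalksStartingWith, mem_filter, mem_finsetWalkLength_iff] at hp ⊢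
    obtain ⟨hlen, hnb, hhead⟩ := hp
    cases p with
    | nil => simp at hhead
    | cons h' p =>
      simp only [darts_cons, List.head?_cons, Option.some.injEq] at hhead
      subst hhead
      refine ⟨by simp [hlen], (isNonBacktracking_cons_cons_iff _ _ _).2
        ⟨fun h => (mem_nbSucc.1 hd').2 h.symm, hnb⟩, by simp⟩
  · intro d₁ _ d₂ _ hne
    rw [Function.onFun, Finset.disjoint_left]
    intro p h₁ h₂
    apply hne
    simp only [nbWalksStartingWith, mem_filter] at h₁ h₂
    exact Option.some_injective _ (h₁.2.2.symm.trans h₂.2.2)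

theorem nbCount_le_sum_card_nbWalksStartingWith (t : ℕ) (d : G.Dart) :
    G.nbCount t d ≤ ∑ v, (G.nbWalksStartingWith (t + 1) d.fst v d).card := by
  induction t generalizing d with
  | zero =>
    have : cons d.adj nil ∈ G.nbWalksStartingWith 1 d.fst d.snd d := by
      simp only [nbWalksStartingWith, mem_filter, mem_finsetWalkLength_iff]
      exact ⟨rfl, List.isChain_singleton _, rfl⟩
    exact (card_pos.2 ⟨_, this⟩).trans_le
      (single_le_sum (f := fun v => (G.nbWalksStartingWith 1 d.fst v d).card)
        (fun _ _ => Nat.zero_le _) (mem_univ _))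
  | succ t ih =>
    calc G.nbCount (t + 1) d = ∑ d' ∈ G.nbSucc d, G.nbCount t d' := rfl
      _ ≤ ∑ d' ∈ G.nbSucc d, ∑ v, (G.nbWalksStartingWith (t + 1) d.snd v d').card :=
        sum_le_sum fun d' hd' => (mem_nbSucc.1 hd').1 ▸ ih d'
      _ = ∑ v, ∑ d' ∈ G.nbSucc d, (G.nbWalksStartingWith (t + 1) d.snd v d').card := sum_comm
      _ ≤ ∑ v, (G.nbWalksStartingWith (t + 2) d.fst v d).card :=
        sum_le_sum fun v _ => sum_card_nbWalksStartingWith_le t d v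

end NonBacktrackingCount

end SimpleGraph

namespace NearRamanujan

open SimpleGraph Finset Walk Real

variable {V : Type*} [Fintype V] [DecidableEq V]

/-! ### Peeling to a graph without vertices of degree one -/

theorem edgesWithin_univ (G : SimpleGraph V) : edgesWithin G univ = G.edgeFinset.card := by
  simp [edgesWithin]

theorem card_edgeFinset_spanningCoe_induce (G : SimpleGraph V) (S : Finset V) :
    (G.induce (S : Set V)).spanningCoe.edgeFinset.card = edgesWithin G S := by
  unfold edgesWithin
  congr 1
  ext e
  induction e using Sym2.ind with
  | _ a b =>
    simp only [mem_edgeFinset, SimpleGraph.mem_edgeSet, spanningCoe_induce_adj, mem_filter]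
    simp

theorem degree_spanningCoe_induce_of_notMem {G : SimpleGraph V} {S : Finset V} {v : V}
    (hv : v ∉ S) : (G.induce (S : Set V)).spanningCoe.degree v = 0 := by
  rw [← card_neighborFinset_eq_degree, card_eq_zero, eq_empty_iff_forall_notMem]
  simp [hv]

theorem edgesWithin_le_edgesWithin_erase_add_degree (G : SimpleGraph V) (S : Finset V) (x : V) :
    edgesWithin G S ≤
      edgesWithin G (S.erase x) + (G.induce (S : Set V)).spanningCoe.degree x := by
  rw [← card_incidenceFinset_eq_degree]
  refine (card_le_card fun e he => ?_).trans (card_union_le _ _)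
  simp only [mem_filter, mem_edgeFinset] at he
  by_cases hx : x ∈ e
  · refine mem_union_right _ ((mem_incidenceFinset _ _ _).2 ⟨?_, hx⟩)
    induction e using Sym2.ind with
    | _ a b => simpa [spanningCoe_induce_adj] using ⟨he.1, he.2 a (by simp), he.2 b (by simp)⟩
  · refine mem_union_left _ (mem_filter.2 ⟨mem_edgeFinset.2 he.1, fun y hy => ?_⟩)
    exact mem_erase.2 ⟨fun h => hx (h ▸ hy), he.2 y hy⟩

/-- Deleting a vertex with at most one neighbour does not decrease `e(S) - |S|`. -/
theorem exists_subset_degree_ne_one_and_excess_le (G : SimpleGraph V) (S : Finset V) :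
    ∃ T ⊆ S, (∀ v, (G.induce (T : Set V)).spanningCoe.degree v ≠ 1) ∧
      (edgesWithin G S : ℤ) - S.card ≤ edgesWithin G T - T.card := by
  induction S using Finset.strongInduction with
  | H S ih =>
    by_cases h : ∃ x ∈ S, (G.induce (S : Set V)).spanningCoe.degree x ≤ 1
    · obtain ⟨x, hx, hdeg⟩ := h
      obtain ⟨T, hTS, hT, hexc⟩ := ih (S.erase x) (erase_ssubset hx)
      refine ⟨T, hTS.trans (erase_subset x S), hT, ?_⟩
      have := edgesWithin_le_edgesWithin_erase_add_degree G S x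
      have := card_erase_add_one hx
      omega
    · push Not at h
      refine ⟨S, subset_rfl, fun v => ?_, le_rfl⟩
      by_cases hv : v ∈ S
      · exact (h v hv).ne'
      · rw [degree_spanningCoe_induce_of_notMem hv]
        omega

/-! ### Non-backtracking walks in a unicyclic ball -/

theorem mem_ball_of_mem_support {G : SimpleGraph V} {u x : V} {r : ℕ} (p : G.Walk u x)
    (hp : p.length ≤ r) {a : V} (ha : a ∈ p.support) : a ∈ ball G u r := by
  simp only [ball, mem_filter, mem_univ, true_and]
  exact ⟨p.takeUntil a ha, (p.length_takeUntil_le_length ha).trans hp⟩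

theorem edges_subset_edgeSet_spanningCoe_induce_ball {H Γ : SimpleGraph V} (hΓ : Γ ≤ H)
    {u x : V} {r : ℕ} (p : Γ.Walk u x) (hp : p.length ≤ r) :
    ∀ e ∈ p.edges, e ∈ (H.induce (ball H u r : Set V)).spanningCoe.edgeSet := by
  intro e he
  induction e using Sym2.ind with
  | _ a b =>
    have hsupp : ∀ c ∈ p.support, c ∈ ball H u r := fun c hc =>
      mem_ball_of_mem_support (p.mapLe hΓ) (by simpa using hp)
        (by rwa [support_mapLe_eq_support])
    rw [SimpleGraph.mem_edgeSet, spanningCoe_induce_adj]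
    exact ⟨hΓ (p.adj_of_mem_edges he), hsupp a (p.fst_mem_support_of_mem_edges he),
      hsupp b (p.snd_mem_support_of_mem_edges he)⟩

theorem exists_isAcyclic_deleteEdges_ball {H : SimpleGraph V} {r : ℕ} (hbf : BicycleFree H r)
    (u : V) : ∃ e, ((H.induce (ball H u r : Set V)).spanningCoe.deleteEdges {e}).IsAcyclic := by
  refine exists_isAcyclic_deleteEdges (u := u) (ball H u r) (fun x hx => ?_) ?_
  · obtain ⟨p, hp⟩ := (mem_filter.1 hx).2
    exact ⟨p.transfer _ (edges_subset_edgeSet_spanningCoe_induce_ball le_rfl p hp)⟩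
  · rw [card_edgeFinset_spanningCoe_induce]
    exact hbf u

theorem card_filter_isNonBacktracking_le_three_of_bicycleFree {H Γ : SimpleGraph V}
    [DecidableRel Γ.Adj] {r L : ℕ} (hΓ : Γ ≤ H) (hbf : BicycleFree H r) (hL : L ≤ r)
    (u x : V) : ((Γ.finsetWalkLength L u x).filter (·.IsNonBacktracking)).card ≤ 3 := by
  obtain ⟨e, he⟩ := exists_isAcyclic_deleteEdges_ball hbf u
  have hedges : ∀ p ∈ (Γ.finsetWalkLength L u x).filter (·.IsNonBacktracking),
      ∀ e ∈ p.edges, e ∈ (H.induce (ball H u r : Set V)).spanningCoe.edgeSet := fun p hp =>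
    edges_subset_edgeSet_spanningCoe_induce_ball hΓ p
      ((mem_finsetWalkLength_iff.1 (mem_filter.1 hp).1).trans_le hL)
  rw [← card_attach]
  refine (card_le_card_of_injOn (fun p => p.1.transfer _ (hedges p.1 p.2)) (fun p _ => ?_)
    (fun p _ q _ h => Subtype.ext (edges_injective (by simpa using congrArg Walk.edges h)))).trans
    (card_filter_isNonBacktracking_le_three he L u x)
  have := mem_filter.1 p.2
  simp only [mem_coe, mem_filter, mem_finsetWalkLength_iff, length_transfer,
    isNonBacktracking_transfer] at this ⊢
  exact this

theorem nbCount_sub_one_le_three_mul_card {H Γ : SimpleGraph V} [DecidableRel Γ.Adj] {r : ℕ}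
    (hΓ : Γ ≤ H) (hbf : BicycleFree H r) (hr : 1 ≤ r) (d : Γ.Dart) :
    Γ.nbCount (r - 1) d ≤ 3 * Fintype.card V := by
  calc Γ.nbCount (r - 1) d ≤ ∑ v, (Γ.nbWalksStartingWith (r - 1 + 1) d.fst v d).card :=
        nbCount_le_sum_card_nbWalksStartingWith _ _
    _ ≤ ∑ _v : V, 3 := sum_le_sum fun v _ => by
        refine (card_le_card fun p hp => ?_).trans
          (card_filter_isNonBacktracking_le_three_of_bicycleFree (L := r - 1 + 1) hΓ hbf
            (by omega) d.fst v)
        simp only [nbWalksStartingWith, mem_filter] at hp ⊢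
        exact ⟨hp.1, hp.2.1⟩
    _ = 3 * Fintype.card V := by simp [mul_comm]

/-! ### Comparing the two bounds -/

theorem two_mul_sub_one_mul_sub_card_le {H Γ : SimpleGraph V} [DecidableRel Γ.Adj] {r : ℕ}
    (hΓ : Γ ≤ H) (hbf : BicycleFree H r) (hr : 1 ≤ r) (hdeg : ∀ v, Γ.degree v ≠ 1)
    (T : Finset V) (hT : ∀ v ∉ T, Γ.degree v = 0) :
    2 * ((r : ℝ) - 1) * ((Γ.edgeFinset.card : ℝ) - T.card) ≤
      Γ.edgeFinset.card * log (3 * Fintype.card V) := by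
  have hlower := mul_sum_log_card_nbSucc_le hdeg (r - 1)
  have hupper : ∑ d, log (Γ.nbCount (r - 1) d : ℝ) ≤
      2 * Γ.edgeFinset.card * log (3 * Fintype.card V) :=
    calc ∑ d, log (Γ.nbCount (r - 1) d : ℝ) ≤ ∑ _d : Γ.Dart, log (3 * Fintype.card V) :=
          sum_le_sum fun d _ => log_le_log (by exact_mod_cast one_le_nbCount hdeg _ d)
            (by exact_mod_cast nbCount_sub_one_le_three_mul_card hΓ hbf hr d)
      _ = 2 * Γ.edgeFinset.card * log (3 * Fintype.card V) := by
          rw [sum_const, card_univ, nsmul_eq_mul, dart_card_eq_twice_card_edges]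
          push_cast
          ring
  rw [Nat.cast_sub hr, Nat.cast_one] at hlower
  have : (0 : ℝ) ≤ r - 1 := by
    have : (1 : ℝ) ≤ r := by exact_mod_cast hr
    linarith
  nlinarith [mul_le_mul_of_nonneg_left (four_mul_sub_card_le_sum_log_card_nbSucc T hT) this]

theorem le_log_exp_one_mul_div_mul {k v r : ℝ} (hv : 2 ≤ v) (hk : 0 ≤ k)
    (hr : 10 * log v ≤ r) (h : 2 * (r - 1) * k ≤ (k + v) * log (3 * v)) :
    k ≤ log (exp 1 * v) / r * v := by
  have hlog2 := log_two_gt_d9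
  have hlog3 : log 3 < 1.39 := by
    have : log 3 < log 4 := log_lt_log (by norm_num) (by norm_num)
    have : log 4 = 2 * log 2 := by
      rw [show (4 : ℝ) = 2 ^ 2 by norm_num, log_pow]
      norm_num
    linarith [log_two_lt_d9]
  have hlog3' : 0 < log 3 := log_pos (by norm_num)
  have ha : log 2 ≤ log v := log_le_log (by norm_num) hv
  rw [log_mul (by norm_num) (by linarith)] at h
  rw [log_mul (exp_pos 1).ne' (by linarith), log_exp, div_mul_eq_mul_div,
    le_div_iff₀ (by linarith)]
  set a := log v
  have hM : r * (log 3 + a) ≤ (1 + a) * (2 * (r - 1) - log 3 - a) := by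
    nlinarith [mul_nonneg (by linarith : (0 : ℝ) ≤ r - 10 * a)
      (by linarith : (0 : ℝ) ≤ 2 - log 3 + a),
      mul_nonneg (by linarith : (0 : ℝ) ≤ a - 0.69) (by linarith : (0 : ℝ) ≤ a)]
  refine le_of_mul_le_mul_right ?_ (by linarith : 0 < log 3 + a)
  nlinarith [mul_le_mul_of_nonneg_left hM hk]

theorem log_exp_one_mul_div_mul_nonneg (n r : ℕ) : 0 ≤ log (exp 1 * n) / r * n := by
  rcases n.eq_zero_or_pos with rfl | hn
  · simp
  · have := log_nonneg (one_le_mul_of_one_le_of_one_le (one_le_exp zero_le_one)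
      (by exact_mod_cast hn : (1 : ℝ) ≤ n))
    positivity

/-- Theorem 2.13.  Let `H` be a graph on `v` vertices that is
bicycle-free at radius `r`, with `r ≥ 10·ln v`.  Then `exc(H) = |E| − |V|` is at most
`(ln(e·v)/r)·v`. -/
theorem excess_le_of_bicycleFree {V : Type*} [Fintype V] [DecidableEq V]
    (H : SimpleGraph V) (r : ℕ) (hbf : BicycleFree H r)
    (hr : 10 * Real.log (Fintype.card V) ≤ (r : ℝ)) :
    (H.edgeFinset.card : ℝ) - (Fintype.card V : ℝ)
      ≤ Real.log (Real.exp 1 * (Fintype.card V : ℝ)) / (r : ℝ) * (Fintype.card V : ℝ) := by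
  by_cases hE : H.edgeFinset.card ≤ Fintype.card V
  · have : (H.edgeFinset.card : ℝ) ≤ Fintype.card V := by exact_mod_cast hE
    linarith [log_exp_one_mul_div_mul_nonneg (Fintype.card V) r]
  push Not at hE
  have hv := two_le_card_of_card_lt_card_edgeFinset hE
  have hr1 : 1 ≤ r := by
    have : 0 < log (Fintype.card V) := log_pos (by exact_mod_cast hv)
    exact_mod_cast (show (0 : ℝ) < r by linarith)
  obtain ⟨T, -, hdeg, hexc⟩ := exists_subset_degree_ne_one_and_excess_le H univ
  have hcore := two_mul_sub_one_mul_sub_card_le (spanningCoe_induce_le H T) hbf hr1 hdeg T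
    fun v hv => degree_spanningCoe_induce_of_notMem hv
  rw [card_edgeFinset_spanningCoe_induce] at hcore
  rw [edgesWithin_univ, card_univ] at hexc
  have hexc' : (H.edgeFinset.card : ℝ) - Fintype.card V ≤ edgesWithin H T - T.card := by
    exact_mod_cast hexc
  have hE' : (Fintype.card V : ℝ) < H.edgeFinset.card := by exact_mod_cast hE
  have hT : (T.card : ℝ) ≤ Fintype.card V := by exact_mod_cast card_le_univ T
  have h3v : 0 ≤ log (3 * Fintype.card V) := log_nonneg (by
    have : (2 : ℝ) ≤ Fintype.card V := by exact_mod_cast hv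
    linarith)
  refine hexc'.trans (le_log_exp_one_mul_div_mul (by exact_mod_cast hv) (by linarith) hr ?_)
  nlinarith

end NearRamanujan
end

section
/- Let G = (V,E) be a (q+1)-regular graph with an edge-signing w : E → {±1}; let A be its signed adjacency matrix and B its signed non-backtracking matrix. Let λ be a complex number with λ ∉ {0, 1, −1} such that λ + q/λ is an eigenvalue of A. Then λ is an eigenvalue of B. -/
open scoped Classical

namespace NearRamanujan

variable {V : Type*} [Fintype V] [DecidableEq V]

/-- The signed adjacency matrix of `G` equipped with the edge-signing `σ`
(`σ e = true` meaning sign `+1`, `σ e = false` meaning sign `-1`). -/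
noncomputable def signedAdjT (G : SimpleGraph V) (σ : Sym2 V → Bool) : Matrix V V ℂ :=
  fun u v => if G.Adj u v then (if σ s(u, v) then 1 else -1) else 0

/-- The signed non-backtracking matrix of `G` equipped with the edge-signing `σ`,
indexed by the darts (directed edges) of `G`. -/
noncomputable def nbMatrixT (G : SimpleGraph V) (σ : Sym2 V → Bool) : Matrix G.Dart G.Dart ℂ :=
  fun e f => if e.snd = f.fst ∧ f.snd ≠ e.fst then (if σ s(f.fst, f.snd) then 1 else -1) else 0

/-- Proposition 2.10, a consequence of the Ihara–Bass formula.
Let `G` be a `(q+1)`-regular graph with an edge-signing, `A` its signed adjacency matrix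
and `B` its signed non-backtracking matrix.  If `λ ∉ {0, 1, −1}` is a complex number such
that `λ + q/λ` is an eigenvalue of `A`, then `λ` is an eigenvalue of `B`. -/
theorem ihara_bass_eigenvalue_transfer
    (G : SimpleGraph V) (q : ℕ) (hreg : ∀ v, G.degree v = q + 1)
    (σ : Sym2 V → Bool) (lam : ℂ)
    (h0 : lam ≠ 0) (h1 : lam ≠ 1) (hm1 : lam ≠ -1)
    (hA : lam + (q : ℂ) / lam ∈ spectrum ℂ (signedAdjT G σ)) :
    lam ∈ spectrum ℂ (nbMatrixT G σ) := by
  classical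
  set μ : ℂ := lam + (q : ℂ) / lam with hμ
  set s : V → V → ℂ := fun u v => if σ s(u, v) then 1 else -1 with hs
  have hs_symm : ∀ u v, s u v = s v u := by
    intro u v; simp only [hs, Sym2.eq_swap]
  have hs_sq : ∀ u v, s u v * s u v = 1 := by
    intro u v; simp only [hs]; split <;> norm_num
  -- extract an eigenvector of the signed adjacency matrix
  rw [spectrum.mem_iff] at hA
  have hdetA : (algebraMap ℂ (Matrix V V ℂ) μ - signedAdjT G σ).det = 0 := by
    by_contra h
    exact hA ((Matrix.isUnit_iff_isUnit_det _).mpr (isUnit_iff_ne_zero.mpr h))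
  obtain ⟨φ, hφ0, hφ⟩ := (Matrix.exists_mulVec_eq_zero_iff).mpr hdetA
  have hAφ : (signedAdjT G σ).mulVec φ = μ • φ := by
    have := hφ
    rw [Matrix.sub_mulVec, Algebra.algebraMap_eq_smul_one, Matrix.smul_mulVec,
      Matrix.one_mulVec, sub_eq_zero] at this
    exact this.symm
  have hsum : ∀ v, ∑ x ∈ G.neighborFinset v, s v x * φ x = μ * φ v := by
    intro v
    have h1 : (signedAdjT G σ).mulVec φ v = μ * φ v := by rw [hAφ]; rfl
    rw [Matrix.mulVec, dotProduct] at h1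
    rw [← h1, SimpleGraph.neighborFinset_eq_filter, Finset.sum_filter]
    refine Finset.sum_congr rfl fun x _ => ?_
    by_cases hx : G.Adj v x <;> simp [signedAdjT, hx, hs]
  have hcard : ∀ v, (G.neighborFinset v).card = q + 1 := by
    intro v; rw [SimpleGraph.card_neighborFinset_eq_degree, hreg]
  -- the candidate eigenvector of the non-backtracking matrix
  set g : G.Dart → ℂ := fun e => lam * φ e.snd - s e.fst e.snd * φ e.fst with hg
  have hlamμ : lam * μ = lam * lam + (q : ℂ) := by
    rw [hμ]; field_simp
  -- main computation
  have key : ∀ e : G.Dart, (nbMatrixT G σ).mulVec g e = lam * g e := by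
    intro e
    obtain ⟨⟨u, v⟩, he⟩ := e
    set e : G.Dart := ⟨(u, v), he⟩ with hedef
    have hu : u ∈ G.neighborFinset v := by
      rw [SimpleGraph.mem_neighborFinset]; exact he.symm
    have step1 : (nbMatrixT G σ).mulVec g e
        = ∑ f ∈ Finset.univ.filter (fun f : G.Dart => f.fst = v),
            (if f.snd ≠ u then s f.fst f.snd * g f else 0) := by
      rw [Matrix.mulVec, dotProduct]
      rw [← Finset.sum_filter_of_ne (f := fun f : G.Dart => nbMatrixT G σ e f * g f)
        (p := fun f : G.Dart => f.fst = v) (fun x _ hx => by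
          by_contra hxv
          have : ¬ ((e.snd = x.fst) ∧ x.snd ≠ e.fst) := by
            intro hc; exact hxv hc.1.symm
          apply hx
          simp [nbMatrixT, this])]
      refine Finset.sum_congr rfl fun f hf => ?_
      have h1 : f.fst = v := (Finset.mem_filter.mp hf).2
      by_cases h2 : f.snd ≠ u <;>
        simp [nbMatrixT, hedef, h1, h2, hs]
    have step2 : (Finset.univ.filter (fun f : G.Dart => f.fst = v))
        = Finset.univ.image (G.dartOfNeighborSet v) := by
      have := G.dart_fst_fiber v
      convert this using 2
    have step3 : (nbMatrixT G σ).mulVec g e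
        = ∑ x ∈ G.neighborFinset v,
            (if x ≠ u then s v x * (lam * φ x - s v x * φ v) else 0) := by
      rw [step1, step2, Finset.sum_image (fun a _ b _ h =>
        G.dartOfNeighborSet_injective v h)]
      rw [SimpleGraph.neighborFinset, ← Finset.sum_set_coe]
      rfl
    have huterm : (if (u : V) ≠ u then s v u * (lam * φ u - s v u * φ v) else 0) = 0 := by
      simp
    have step4 : ∑ x ∈ G.neighborFinset v,
          (if x ≠ u then s v x * (lam * φ x - s v x * φ v) else 0)
        = ∑ x ∈ (G.neighborFinset v).erase u, s v x * (lam * φ x - s v x * φ v) := by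
      rw [← Finset.sum_erase_add _ _ hu, huterm, add_zero]
      refine Finset.sum_congr rfl fun x hx => ?_
      rw [if_pos (Finset.ne_of_mem_erase hx)]
    have step5 : ∑ x ∈ (G.neighborFinset v).erase u, s v x * (lam * φ x - s v x * φ v)
        = (∑ x ∈ G.neighborFinset v, s v x * (lam * φ x - s v x * φ v))
            - s v u * (lam * φ u - s v u * φ v) := by
      rw [Finset.sum_erase_eq_sub hu]
    have step6 : ∑ x ∈ G.neighborFinset v, s v x * (lam * φ x - s v x * φ v)
        = lam * (μ * φ v) - ((q : ℂ) + 1) * φ v := by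
      have : ∀ x, s v x * (lam * φ x - s v x * φ v)
          = lam * (s v x * φ x) - (s v x * s v x) * φ v := by intro x; ring
      simp_rw [this, hs_sq]
      rw [Finset.sum_sub_distrib, ← Finset.mul_sum, hsum v, Finset.sum_const, hcard v]
      ring
    rw [step3, step4, step5, step6]
    have : g e = lam * φ v - s u v * φ u := rfl
    rw [this, hs_symm u v]
    have hq2 : s v u * s v u = 1 := hs_sq v u
    linear_combination φ v * hlamμ + φ v * hq2
  -- the vector g is nonzero
  have hg0 : g ≠ 0 := by
    intro hzero
    obtain ⟨v0, hv0⟩ := Function.ne_iff.mp hφ0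
    obtain ⟨u0, hadj⟩ := (G.degree_pos_iff_exists_adj v0).mp (by rw [hreg]; omega)
    have hz1 : g ⟨(v0, u0), hadj⟩ = 0 := by rw [hzero]; rfl
    have hz2 : g ⟨(u0, v0), hadj.symm⟩ = 0 := by rw [hzero]; rfl
    have e1 : lam * φ u0 - s v0 u0 * φ v0 = 0 := hz1
    have e2 : lam * φ v0 - s u0 v0 * φ u0 = 0 := hz2
    have hsq : s v0 u0 * s v0 u0 = 1 := hs_sq v0 u0
    have hsym : s u0 v0 = s v0 u0 := hs_symm u0 v0
    have hlamsq : (lam * lam - 1) * φ v0 = 0 := by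
      linear_combination lam * e2 + s u0 v0 * e1 + (s v0 u0 * φ v0) * hsym + φ v0 * hsq
    rcases mul_eq_zero.mp hlamsq with h | h
    · have : (lam - 1) * (lam + 1) = 0 := by linear_combination h
      rcases mul_eq_zero.mp this with h' | h'
      · exact h1 (sub_eq_zero.mp h')
      · exact hm1 (eq_neg_of_add_eq_zero_left h')
    · exact hv0 h
  -- conclude membership in the spectrum
  rw [spectrum.mem_iff]
  intro hunit
  have hdetB : (algebraMap ℂ (Matrix G.Dart G.Dart ℂ) lam - nbMatrixT G σ).det ≠ 0 := by
    have := (Matrix.isUnit_iff_isUnit_det _).mp hunit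
    exact isUnit_iff_ne_zero.mp this
  apply hdetB
  rw [← Matrix.exists_mulVec_eq_zero_iff]
  refine ⟨g, hg0, ?_⟩
  funext e
  rw [Matrix.sub_mulVec, Algebra.algebraMap_eq_smul_one, Matrix.smul_mulVec,
    Matrix.one_mulVec]
  have := key e
  simp [this]

end NearRamanujan
end
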